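/- Let C be a k-clustering of (X, s) that is perfect and separation-uniform. Then for every weight function w on X and every k-clustering C' of X with C' ≠ C, rcut(C', w[X], s) > rcut(C, w[X], s); that is, C is the unique minimizer of the ratio-cut objective among all k-clusterings of X, for every weight function. -/

import Mathlib

open Finset

/-- A weight function assigns a positive real weight to every point. -/
def IsWeight {X : Type*} (w : X → ℝ) : Prop := ∀ x, 0 < w x

/-- A k-clustering: a partition of `X` into `k` pairwise disjoint nonempty parts. -/
def IsClustering {X : Type*} [Fintype X] [DecidableEq X]
    (C : Finset (Finset X)) (k : ℕ) : Prop :=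
  C.card = k ∧ (∀ A ∈ C, A.Nonempty) ∧
  (∀ A ∈ C, ∀ B ∈ C, A ≠ B → Disjoint A B) ∧
  (∀ x : X, ∃ A ∈ C, x ∈ A)

/-- `x ∼_C y`: `x` and `y` lie in the same cluster of `C`. -/
def SameCluster {X : Type*} [DecidableEq X] (C : Finset (Finset X)) (x y : X) : Prop :=
  ∃ A ∈ C, x ∈ A ∧ y ∈ A

/-- The ratio-cut cost of a clustering `C` of weighted data `(w[X], s)`. -/
noncomputable def rcut {X : Type*} [Fintype X] [DecidableEq X]
    (C : Finset (Finset X)) (w : X → ℝ) (s : X → X → ℝ) : ℝ :=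
  (1 / 2) * ∑ A ∈ C, (∑ x ∈ A, ∑ y ∈ Aᶜ, s x y * w x * w y) / (∑ x ∈ A, w x)

/-- `C` is perfect: within-cluster similarities all exceed between-cluster similarities. -/
def IsPerfect {X : Type*} [DecidableEq X] (C : Finset (Finset X)) (s : X → X → ℝ) : Prop :=
  ∀ x₁ x₂ x₃ x₄ : X, SameCluster C x₁ x₂ → ¬ SameCluster C x₃ x₄ → s x₃ x₄ < s x₁ x₂

/-- `C` is separation-uniform: all between-cluster similarities are equal. -/
def IsSeparationUniform {X : Type*} [DecidableEq X]
    (C : Finset (Finset X)) (s : X → X → ℝ) : Prop :=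
  ∃ lam : ℝ, ∀ x y : X, ¬ SameCluster C x y → s x y = lam

/-!
Let `λ` be the common between-cluster similarity of `C`. Since `k > 1` some pair is separated
by `C`, so perfection gives `s > λ` inside the clusters of `C`. The ratio cut is linear in the
similarity, and for a constant similarity `λ` it equals `λ (k - 1) w(X) / 2` for every
`k`-clustering. Hence, writing `s = (s - λ) + λ`, ratio cuts of `k`-clusterings differ only in
the cut of `s - λ`, which is nonnegative, vanishes across the clusters of `C`, and is positive
on some pair that `C` keeps together but `C' ≠ C` separates.
-/

namespace IsClustering

variable {X : Type*} [Fintype X] [DecidableEq X] {C C' : Finset (Finset X)} {k : ℕ}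

lemma eq_of_mem (hC : IsClustering C k) {A B : Finset X} (hA : A ∈ C) (hB : B ∈ C) {x : X}
    (hxA : x ∈ A) (hxB : x ∈ B) : A = B := by
  by_contra h
  exact disjoint_left.mp (hC.2.2.1 A hA B hB h) hxA hxB

lemma not_sameCluster (hC : IsClustering C k) {A : Finset X} (hA : A ∈ C) {x y : X}
    (hx : x ∈ A) (hy : y ∉ A) : ¬ SameCluster C x y := by
  rintro ⟨B, hB, hxB, hyB⟩
  exact hy (hC.eq_of_mem hA hB hx hxB ▸ hyB)

lemma exists_not_sameCluster (hC : IsClustering C k) (hk : 1 < k) :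
    ∃ x y : X, ¬ SameCluster C x y := by
  obtain ⟨A, hA, B, hB, hAB⟩ := one_lt_card.mp (hC.1 ▸ hk)
  obtain ⟨x, hx⟩ := hC.2.1 A hA
  obtain ⟨y, hy⟩ := hC.2.1 B hB
  have hyA : y ∉ A := disjoint_left.mp (hC.2.2.1 B hB A hA (Ne.symm hAB)) hy
  exact ⟨x, y, hC.not_sameCluster hA hx hyA⟩

lemma sum_sum (hC : IsClustering C k) (f : X → ℝ) : ∑ A ∈ C, ∑ x ∈ A, f x = ∑ x, f x := by
  have hunion : C.biUnion id = univ :=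
    eq_univ_iff_forall.mpr fun x ↦ mem_biUnion.mpr (hC.2.2.2 x)
  rw [← hunion, sum_biUnion (t := id) fun A hA B hB ↦ hC.2.2.1 A hA B hB]
  rfl

lemma eq_of_forall_exists_subset (hC : IsClustering C k) (hC' : IsClustering C' k)
    (h : ∀ A ∈ C, ∃ A' ∈ C', A ⊆ A') : C = C' := by
  choose! f hfC' hsubf using h
  have hsurj : Set.SurjOn f C C' := by
    intro A' hA'
    obtain ⟨x, hx⟩ := hC'.2.1 A' hA'
    obtain ⟨A, hA, hxA⟩ := hC.2.2.2 x
    exact ⟨A, hA, hC'.eq_of_mem (hfC' A hA) hA' (hsubf A hA hxA) hx⟩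
  have hinj : Set.InjOn f C :=
    injOn_of_surjOn_of_card_le f hfC' hsurj (by rw [hC.1, hC'.1])
  have hfix : ∀ A ∈ C, f A = A := by
    intro A hA
    refine Subset.antisymm (fun y hy ↦ ?_) (hsubf A hA)
    obtain ⟨B, hB, hyB⟩ := hC.2.2.2 y
    have hfB : f B = f A := hC'.eq_of_mem (hfC' B hB) (hfC' A hA) (hsubf B hB hyB) hy
    exact hinj hB hA hfB ▸ hyB
  refine eq_of_subset_of_card_le (fun A hA ↦ ?_) (by rw [hC.1, hC'.1])
  exact hfix A hA ▸ hfC' A hA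

lemma eq_of_sameCluster_imp (hC : IsClustering C k) (hC' : IsClustering C' k)
    (h : ∀ x y, SameCluster C x y → SameCluster C' x y) : C = C' := by
  refine hC.eq_of_forall_exists_subset hC' fun A hA ↦ ?_
  obtain ⟨x, hx⟩ := hC.2.1 A hA
  obtain ⟨A', hA', hxA'⟩ := hC'.2.2.2 x
  refine ⟨A', hA', fun y hy ↦ ?_⟩
  obtain ⟨B', hB', hxB', hyB'⟩ := h x y ⟨A, hA, hx, hy⟩
  exact hC'.eq_of_mem hB' hA' hxB' hxA' ▸ hyB'

end IsClustering

section Rcut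

variable {X : Type*} [Fintype X] [DecidableEq X] {C : Finset (Finset X)} {k : ℕ}
  {w : X → ℝ}

lemma rcut_add (s t : X → X → ℝ) :
    rcut C w (s + t) = rcut C w s + rcut C w t := by
  simp only [rcut, Pi.add_apply, add_mul, sum_add_distrib, add_div, mul_add]

lemma rcut_const (hC : IsClustering C k) (hw : IsWeight w) (c : ℝ) :
    rcut C w (fun _ _ ↦ c) = c / 2 * ((k : ℝ) - 1) * ∑ x, w x := by
  have hterm : ∀ A ∈ C, (∑ x ∈ A, ∑ y ∈ Aᶜ, c * w x * w y) / (∑ x ∈ A, w x)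
      = c * ((∑ x, w x) - ∑ x ∈ A, w x) := by
    intro A hA
    obtain ⟨a, ha⟩ := hC.2.1 A hA
    have hwA : (∑ x ∈ A, w x) ≠ 0 := (sum_pos (fun x _ ↦ hw x) ⟨a, ha⟩).ne'
    have hcompl : ∑ y ∈ Aᶜ, w y = (∑ x, w x) - ∑ x ∈ A, w x := by
      rw [← sum_compl_add_sum A w]; ring
    simp_rw [mul_assoc, ← mul_sum, ← sum_mul, hcompl]
    field_simp
  rw [rcut, sum_congr rfl hterm, ← mul_sum, sum_sub_distrib, sum_const, hC.1, hC.sum_sum,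
    nsmul_eq_mul]
  ring

lemma rcut_eq_zero_of_forall_not_sameCluster (hC : IsClustering C k) {s : X → X → ℝ}
    (hs : ∀ x y, ¬ SameCluster C x y → s x y = 0) : rcut C w s = 0 := by
  refine mul_eq_zero_of_right _ (sum_eq_zero fun A hA ↦ ?_)
  refine div_eq_zero_iff.mpr (Or.inl (sum_eq_zero fun x hx ↦ sum_eq_zero fun y hy ↦ ?_))
  rw [hs x y (hC.not_sameCluster hA hx (mem_compl.mp hy)), zero_mul, zero_mul]

lemma rcut_pos_of_not_sameCluster (hC : IsClustering C k) (hw : IsWeight w)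
    {s : X → X → ℝ} (hs : ∀ x y, 0 ≤ s x y) {x y : X} (hxy : ¬ SameCluster C x y)
    (hsxy : 0 < s x y) :
    0 < rcut C w s := by
  have hterm_nonneg : ∀ a b, 0 ≤ s a b * w a * w b :=
    fun a b ↦ mul_nonneg (mul_nonneg (hs a b) (hw a).le) (hw b).le
  obtain ⟨A, hA, hxA⟩ := hC.2.2.2 x
  have hyA : y ∉ A := fun hyA ↦ hxy ⟨A, hA, hxA, hyA⟩
  have hcut : 0 < ∑ a ∈ A, ∑ b ∈ Aᶜ, s a b * w a * w b :=
    sum_pos' (fun a _ ↦ sum_nonneg fun b _ ↦ hterm_nonneg a b)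
      ⟨x, hxA, sum_pos' (fun b _ ↦ hterm_nonneg x b)
        ⟨y, mem_compl.mpr hyA, mul_pos (mul_pos hsxy (hw x)) (hw y)⟩⟩
  refine mul_pos one_half_pos (sum_pos' (fun B _ ↦ ?_) ⟨A, hA, ?_⟩)
  · exact div_nonneg (sum_nonneg fun a _ ↦ sum_nonneg fun b _ ↦ hterm_nonneg a b)
      (sum_nonneg fun a _ ↦ (hw a).le)
  · exact div_pos hcut (sum_pos (fun a _ ↦ hw a) ⟨x, hxA⟩)

end Rcut

theorem rcut_unique_minimizer_of_perfect_separationUniform_general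
    {X : Type*} [Fintype X] [DecidableEq X]
    (s : X → X → ℝ)
    (k : ℕ) (hk1 : 1 < k)
    (C : Finset (Finset X)) (hC : IsClustering C k)
    (hperf : IsPerfect C s) (hsep : IsSeparationUniform C s)
    (w : X → ℝ) (hw : IsWeight w)
    (C' : Finset (Finset X)) (hC' : IsClustering C' k) (hne : C' ≠ C) :
    rcut C w s < rcut C' w s := by
  obtain ⟨lam, hlam⟩ := hsep
  obtain ⟨a, b, hab⟩ := hC.exists_not_sameCluster hk1
  have hlt : ∀ x y, SameCluster C x y → lam < s x y :=
    fun x y hxy ↦ hlam a b hab ▸ hperf x y a b hxy hab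
  set u : X → X → ℝ := fun x y ↦ s x y - lam
  have hsplit : s = u + fun _ _ ↦ lam := by ext; simp [u]
  have hu : ∀ x y, 0 ≤ u x y := by
    intro x y
    by_cases hxy : SameCluster C x y
    · exact sub_nonneg.mpr (hlt x y hxy).le
    · simp [u, hlam x y hxy]
  obtain ⟨x, y, hxy, hxy'⟩ : ∃ x y, SameCluster C x y ∧ ¬ SameCluster C' x y := by
    by_contra! h
    exact hne (hC.eq_of_sameCluster_imp hC' h).symm
  have hcutC : rcut C w u = 0 :=
    rcut_eq_zero_of_forall_not_sameCluster hC fun x y hxy ↦ by simp [u, hlam x y hxy]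
  have hcutC' : 0 < rcut C' w u :=
    rcut_pos_of_not_sameCluster hC' hw hu hxy' (sub_pos.mpr (hlt x y hxy))
  rw [hsplit, rcut_add, rcut_add, rcut_const hC hw, rcut_const hC' hw, hcutC]
  linarith

/-- if `C` is a perfect and separation-uniform k-clustering, then for every
weight function `w`, `C` is the unique minimizer of ratio-cut among k-clusterings: every
other k-clustering has strictly larger ratio-cut cost. -/
theorem rcut_unique_minimizer_of_perfect_separationUniform
    {X : Type*} [Fintype X] [DecidableEq X]
    (s : X → X → ℝ) (hsym : ∀ x y, s x y = s y x) (hnn : ∀ x y, 0 ≤ s x y)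
    (k : ℕ) (hk1 : 1 < k) (hk2 : k < Fintype.card X)
    (C : Finset (Finset X)) (hC : IsClustering C k)
    (hperf : IsPerfect C s) (hsep : IsSeparationUniform C s)
    (w : X → ℝ) (hw : IsWeight w)
    (C' : Finset (Finset X)) (hC' : IsClustering C' k) (hne : C' ≠ C) :
    rcut C w s < rcut C' w s :=
  rcut_unique_minimizer_of_perfect_separationUniform_general s k hk1 C hC hperf hsep w hw C' hC' hne
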